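/- arXiv:1608.00128 — 3 statements merged into one kernel-verified Lean document; each statement's English description precedes it below -/
import Mathlib

section
/- For 1 < α < 2 and x ∈ (0,1), the left Riemann–Liouville fractional integral of order 2−α of the function k(s) = s^{α/2−1}(1−s)^{α/2−1} satisfies: (1/Γ(2−α)) ∫₀ˣ (x−s)^{1−α} s^{α/2−1} (1−s)^{α/2−1} ds = (Γ(α/2)/Γ(1−α/2)) ∫₀ˣ s^{−α/2} (1−s)^{−α/2} ds. -/
/-!
Let `I^a` be the Riemann–Liouville integral of order `a` from `0`, `g u = u^{-α/2} (1-u)^{-α/2}`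
and `k s = s^{α/2-1} (1-s)^{α/2-1}`. The Möbius substitution `u = s w / (1 - s + s w)` turns
`I^{α-1} g (s)` into a Beta integral, so that `I^{α-1} g = (Γ(1-α/2) / Γ(α/2)) k`. Applying
`I^{2-α}` and the semigroup law `I^{2-α} I^{α-1} = I^1` (Fubini on a triangle and one more Beta
integral) gives the identity. Everything is done for `ℝ≥0∞`-valued integrands, where Fubini and the
changes of variables need no integrability hypotheses.
-/

open MeasureTheory Set intervalIntegral ProbabilityTheory
open scoped ENNReal

theorem lintegral_rpow_mul_one_sub_rpow {p q : ℝ} (hp : 0 < p) (hq : 0 < q) :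
    ∫⁻ t in Ioo 0 1, ENNReal.ofReal (t ^ (p - 1) * (1 - t) ^ (q - 1)) =
      ENNReal.ofReal (beta p q) := by
  have hB := beta_pos hp hq
  have h := lintegral_betaPDF_eq_one hp hq
  simp_rw [lintegral_betaPDF, mul_assoc, ENNReal.ofReal_mul (one_div_pos.2 hB).le,
    lintegral_const_mul' _ _ ENNReal.ofReal_ne_top, one_div, ENNReal.ofReal_inv_of_pos hB] at h
  simpa using ENNReal.eq_inv_of_mul_eq_one_left ((mul_comm _ _).trans h)

theorem lintegral_Ioo_eq_lintegral_deriv_mul_of_deriv_pos {f f' : ℝ → ℝ} {a b : ℝ} (hab : a ≤ b)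
    (hf : ContinuousOn f (Icc a b)) (hff' : ∀ x ∈ Ioo a b, HasDerivAt f (f' x) x)
    (hf' : ∀ x ∈ Ioo a b, 0 < f' x) (u : ℝ → ℝ≥0∞) :
    ∫⁻ y in Ioo (f a) (f b), u y = ∫⁻ x in Ioo a b, ENNReal.ofReal (f' x) * u (f x) := by
  have hmono : StrictMonoOn f (Icc a b) := by
    refine strictMonoOn_of_deriv_pos (convex_Icc a b) hf fun x hx ↦ ?_
    rw [interior_Icc] at hx
    rw [(hff' x hx).deriv]
    exact hf' x hx
  rw [← hf.image_Ioo_of_strictMonoOn hab hmono]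
  exact lintegral_image_eq_lintegral_deriv_mul_of_monotoneOn measurableSet_Ioo
    (fun x hx ↦ (hff' x hx).hasDerivWithinAt) (hmono.monotoneOn.mono Ioo_subset_Icc_self) u

theorem lintegral_sub_rpow_mul_sub_rpow {p q a b : ℝ} (hp : 0 < p) (hq : 0 < q) (hab : a < b) :
    ∫⁻ t in Ioo a b, ENNReal.ofReal ((t - a) ^ (p - 1) * (b - t) ^ (q - 1)) =
      ENNReal.ofReal ((b - a) ^ (p + q - 1) * beta p q) := by
  have hba : 0 < b - a := sub_pos.2 hab
  have h := lintegral_Ioo_eq_lintegral_deriv_mul_of_deriv_pos zero_le_one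
    (f := fun w ↦ a + (b - a) * w) (f' := fun _ ↦ b - a) (by fun_prop)
    (fun w _ ↦ by simpa using ((hasDerivAt_id w).const_mul (b - a)).const_add a)
    (fun _ _ ↦ hba) fun t ↦ ENNReal.ofReal ((t - a) ^ (p - 1) * (b - t) ^ (q - 1))
  simp only [mul_zero, add_zero, mul_one, add_sub_cancel] at h
  rw [h, ENNReal.ofReal_mul (by positivity), ← lintegral_rpow_mul_one_sub_rpow hp hq,
    ← lintegral_const_mul' _ _ ENNReal.ofReal_ne_top]
  refine setLIntegral_congr_fun measurableSet_Ioo fun w hw ↦ ?_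
  rw [← ENNReal.ofReal_mul hba.le, ← ENNReal.ofReal_mul (by positivity)]
  congr 1
  rw [show b - (a + (b - a) * w) = (b - a) * (1 - w) by ring, add_sub_cancel_left,
    Real.mul_rpow hba.le hw.1.le, Real.mul_rpow hba.le (by linarith [hw.2]),
    show p + q - 1 = (p - 1) + (q - 1) + 1 by ring, Real.rpow_add hba, Real.rpow_add hba,
    Real.rpow_one]
  ring

theorem lintegral_Ioo_lintegral_Ioo_swap {x : ℝ} {K : ℝ → ℝ → ℝ≥0∞}
    (hK : Measurable (Function.uncurry K)) :
    ∫⁻ s in Ioo 0 x, ∫⁻ u in Ioo 0 s, K s u = ∫⁻ u in Ioo 0 x, ∫⁻ s in Ioo u x, K s u := by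
  set T : Set (ℝ × ℝ) := {z | 0 < z.2 ∧ z.2 < z.1 ∧ z.1 < x}
  have hT : MeasurableSet T := by
    exact (measurableSet_lt measurable_const measurable_snd).inter
      ((measurableSet_lt measurable_snd measurable_fst).inter
      (measurableSet_lt measurable_fst measurable_const))
  have hL : ∫⁻ s in Ioo 0 x, ∫⁻ u in Ioo 0 s, K s u =
      ∫⁻ s, ∫⁻ u, T.indicator (Function.uncurry K) (s, u) := by
    rw [← lintegral_indicator measurableSet_Ioo]
    congr 1; funext s
    by_cases hs : s ∈ Ioo 0 x
    · rw [indicator_of_mem hs, ← lintegral_indicator measurableSet_Ioo]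
      congr 1; funext u
      simp only [indicator_apply, T, mem_ofPred_eq, mem_Ioo, Function.uncurry_apply_pair]
      grind
    · rw [indicator_of_notMem hs]
      have h0 : ∀ u, T.indicator (Function.uncurry K) (s, u) = 0 :=
        fun u ↦ indicator_of_notMem (by grind) _
      simp [h0]
  have hR : ∫⁻ u in Ioo 0 x, ∫⁻ s in Ioo u x, K s u =
      ∫⁻ u, ∫⁻ s, T.indicator (Function.uncurry K) (s, u) := by
    rw [← lintegral_indicator measurableSet_Ioo]
    congr 1; funext u
    by_cases hu : u ∈ Ioo 0 x
    · rw [indicator_of_mem hu, ← lintegral_indicator measurableSet_Ioo]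
      congr 1; funext s
      simp only [indicator_apply, T, mem_ofPred_eq, mem_Ioo, Function.uncurry_apply_pair]
      grind
    · rw [indicator_of_notMem hu]
      have h0 : ∀ s, T.indicator (Function.uncurry K) (s, u) = 0 :=
        fun s ↦ indicator_of_notMem (by grind) _
      simp [h0]
  rw [hL, hR, lintegral_lintegral_swap (f := fun s u ↦ T.indicator (Function.uncurry K) (s, u))
    (hK.indicator hT).aemeasurable]

noncomputable def riemannLiouville (a : ℝ) (g : ℝ → ℝ≥0∞) (x : ℝ) : ℝ≥0∞ :=
  ENNReal.ofReal (Real.Gamma a)⁻¹ * ∫⁻ s in Ioo 0 x, ENNReal.ofReal ((x - s) ^ (a - 1)) * g s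

theorem riemannLiouville_congr {a x : ℝ} {g h : ℝ → ℝ≥0∞} (hgh : EqOn g h (Ioo 0 x)) :
    riemannLiouville a g x = riemannLiouville a h x := by
  unfold riemannLiouville
  rw [setLIntegral_congr_fun measurableSet_Ioo fun s hs ↦ by rw [hgh hs]]

theorem riemannLiouville_const_mul (a : ℝ) {c : ℝ≥0∞} (hc : c ≠ ∞) (g : ℝ → ℝ≥0∞) (x : ℝ) :
    riemannLiouville a (fun s ↦ c * g s) x = c * riemannLiouville a g x := by
  simp only [riemannLiouville, mul_left_comm _ c, lintegral_const_mul' _ _ hc]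

theorem riemannLiouville_riemannLiouville {a b : ℝ} (ha : 0 < a) (hb : 0 < b) {g : ℝ → ℝ≥0∞}
    (hg : Measurable g) (x : ℝ) :
    riemannLiouville a (riemannLiouville b g) x = riemannLiouville (a + b) g x := by
  set K : ℝ → ℝ → ℝ≥0∞ := fun s u ↦
    ENNReal.ofReal ((x - s) ^ (a - 1)) * (ENNReal.ofReal ((s - u) ^ (b - 1)) * g u)
  have hK : Measurable (Function.uncurry K) := by fun_prop
  have hinner : ∀ u ∈ Ioo 0 x, ∫⁻ s in Ioo u x, K s u =
      ENNReal.ofReal (beta b a) * (ENNReal.ofReal ((x - u) ^ (a + b - 1)) * g u) := by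
    intro u hu
    calc ∫⁻ s in Ioo u x, K s u
        = ∫⁻ s in Ioo u x, ENNReal.ofReal ((s - u) ^ (b - 1) * (x - s) ^ (a - 1)) * g u := by
          refine setLIntegral_congr_fun measurableSet_Ioo fun s hs ↦ ?_
          rw [ENNReal.ofReal_mul (by have := hs.1; positivity)]
          ring
      _ = ENNReal.ofReal ((x - u) ^ (b + a - 1) * beta b a) * g u := by
          rw [lintegral_mul_const _ (by fun_prop), lintegral_sub_rpow_mul_sub_rpow hb ha hu.2]
      _ = _ := by
          rw [ENNReal.ofReal_mul (by have := hu.2; positivity), add_comm b a]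
          ring
  have hΓ : ENNReal.ofReal (Real.Gamma a)⁻¹ * ENNReal.ofReal (Real.Gamma b)⁻¹ *
      ENNReal.ofReal (beta b a) = ENNReal.ofReal (Real.Gamma (a + b))⁻¹ := by
    have := Real.Gamma_pos_of_pos ha
    have := Real.Gamma_pos_of_pos hb
    rw [← ENNReal.ofReal_mul (by positivity), ← ENNReal.ofReal_mul (by positivity), beta,
      add_comm b a]
    congr 1
    field_simp
  calc riemannLiouville a (riemannLiouville b g) x
      = ENNReal.ofReal (Real.Gamma a)⁻¹ * ENNReal.ofReal (Real.Gamma b)⁻¹ *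
          ∫⁻ s in Ioo 0 x, ∫⁻ u in Ioo 0 s, K s u := by
        simp only [riemannLiouville, K, mul_assoc, mul_left_comm _ (ENNReal.ofReal (Real.Gamma b)⁻¹),
          ← lintegral_const_mul' _ _ ENNReal.ofReal_ne_top]
    _ = ENNReal.ofReal (Real.Gamma a)⁻¹ * ENNReal.ofReal (Real.Gamma b)⁻¹ *
          ∫⁻ u in Ioo 0 x, ENNReal.ofReal (beta b a) *
            (ENNReal.ofReal ((x - u) ^ (a + b - 1)) * g u) := by
        rw [lintegral_Ioo_lintegral_Ioo_swap hK, setLIntegral_congr_fun measurableSet_Ioo hinner]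
    _ = riemannLiouville (a + b) g x := by
        rw [lintegral_const_mul' _ _ ENNReal.ofReal_ne_top, ← mul_assoc, hΓ, riemannLiouville]

-- The substitution `u = s w / D`, `D = 1 - s + s w`, maps `(0, 1)` onto `(0, s)`; the powers of `D`
-- cancel because `2 + (b - 1) + (p - 1) = p + b`.
theorem ofReal_mobius_jacobian_mul {p b s w : ℝ} (hs : s ∈ Ioo 0 1) (hw : w ∈ Ioo 0 1) :
    ENNReal.ofReal (s * (1 - s) / (1 - s + s * w) ^ 2) *
        (ENNReal.ofReal ((s - s * w / (1 - s + s * w)) ^ (b - 1)) *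
          ENNReal.ofReal ((s * w / (1 - s + s * w)) ^ (p - 1) *
            (1 - s * w / (1 - s + s * w)) ^ (-(p + b)))) =
      ENNReal.ofReal (s ^ (p + b - 1) * (1 - s) ^ (-p)) *
        ENNReal.ofReal (w ^ (p - 1) * (1 - w) ^ (b - 1)) := by
  obtain ⟨hs0, hs1⟩ := hs
  obtain ⟨hw0, hw1⟩ := hw
  have h1s : 0 < 1 - s := sub_pos.2 hs1
  have h1w : 0 < 1 - w := sub_pos.2 hw1
  set D := 1 - s + s * w
  have hD : 0 < D := by positivity
  rw [show s - s * w / D = s * (1 - s) * (1 - w) / D by field_simp; ring,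
    show 1 - s * w / D = (1 - s) / D by field_simp; ring,
    ← ENNReal.ofReal_mul (by positivity), ← ENNReal.ofReal_mul (by positivity),
    ← ENNReal.ofReal_mul (by positivity)]
  congr 1
  refine Real.log_injOn_pos (mem_Ioi.2 (by positivity)) (mem_Ioi.2 (by positivity)) ?_
  simp (disch := positivity) only [Real.log_mul, Real.log_div, Real.log_rpow, Real.log_pow]
  push_cast
  ring

theorem riemannLiouville_rpow_mul_one_sub_rpow {p b s : ℝ} (hp : 0 < p) (hb : 0 < b)
    (hs : s ∈ Ioo 0 1) :
    riemannLiouville b (fun u ↦ ENNReal.ofReal (u ^ (p - 1) * (1 - u) ^ (-(p + b)))) s =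
      ENNReal.ofReal (Real.Gamma p / Real.Gamma (p + b) * (s ^ (p + b - 1) * (1 - s) ^ (-p))) := by
  obtain ⟨hs0, hs1⟩ := hs
  have hD : ∀ w, 0 ≤ w → 0 < 1 - s + s * w := fun w hw ↦ by positivity
  have hsub := lintegral_Ioo_eq_lintegral_deriv_mul_of_deriv_pos zero_le_one
    (f := fun w ↦ s * w / (1 - s + s * w)) (f' := fun w ↦ s * (1 - s) / (1 - s + s * w) ^ 2)
    (continuousOn_of_forall_continuousAt fun w hw ↦ by
      have := hD w hw.1
      fun_prop (disch := positivity))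
    (fun w hw ↦ (((hasDerivAt_id' w).const_mul s).fun_div
        (((hasDerivAt_id' w).const_mul s).const_add (1 - s)) (hD w hw.1.le).ne').congr_deriv
        (by ring))
    (fun w hw ↦ by have := hD w hw.1.le; positivity)
    fun u ↦ ENNReal.ofReal ((s - u) ^ (b - 1)) *
      ENNReal.ofReal (u ^ (p - 1) * (1 - u) ^ (-(p + b)))
  simp only [mul_zero, zero_div, mul_one, sub_add_cancel, div_one] at hsub
  have hΓ := Real.Gamma_pos_of_pos hb
  rw [riemannLiouville, hsub,
    setLIntegral_congr_fun measurableSet_Ioo fun w hw ↦ ofReal_mobius_jacobian_mul ⟨hs0, hs1⟩ hw,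
    lintegral_const_mul' _ _ ENNReal.ofReal_ne_top, lintegral_rpow_mul_one_sub_rpow hp hb,
    ← ENNReal.ofReal_mul (by positivity), ← ENNReal.ofReal_mul (by positivity), beta]
  congr 1
  field_simp

theorem toReal_riemannLiouville_ofReal {a x : ℝ} (ha : 0 < a) (hx : 0 ≤ x) {f : ℝ → ℝ}
    (hf : Measurable f) (hf₀ : ∀ s ∈ Ioo 0 x, 0 ≤ f s) :
    (riemannLiouville a (fun s ↦ ENNReal.ofReal (f s)) x).toReal =
      (Real.Gamma a)⁻¹ * ∫ s in 0..x, (x - s) ^ (a - 1) * f s := by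
  have hnonneg : ∀ s ∈ Ioo 0 x, 0 ≤ (x - s) ^ (a - 1) * f s := fun s hs ↦ by
    have := hs.2
    have := hf₀ s hs
    positivity
  rw [integral_of_le hx, integral_Ioc_eq_integral_Ioo, integral_eq_lintegral_of_nonneg_ae
      (ae_restrict_of_forall_mem measurableSet_Ioo hnonneg) (by fun_prop),
    riemannLiouville, ENNReal.toReal_mul,
    ENNReal.toReal_ofReal (inv_nonneg.2 (Real.Gamma_pos_of_pos ha).le)]
  congr 2
  refine setLIntegral_congr_fun measurableSet_Ioo fun s hs ↦ ?_
  rw [ENNReal.ofReal_mul (by have := hs.2; positivity)]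

theorem riemannLiouville_sub_one_rpow_neg_half_mul {α s : ℝ} (hα₁ : 1 < α) (hα₂ : α < 2)
    (hs : s ∈ Ioo 0 1) :
    riemannLiouville (α - 1) (fun u ↦ ENNReal.ofReal (u ^ (-(α/2)) * (1 - u) ^ (-(α/2)))) s =
      ENNReal.ofReal (Real.Gamma (1 - α/2) / Real.Gamma (α/2)) *
        ENNReal.ofReal (s ^ (α/2 - 1) * (1 - s) ^ (α/2 - 1)) := by
  have h := riemannLiouville_rpow_mul_one_sub_rpow (p := 1 - α/2) (b := α - 1) (by linarith)
    (by linarith) hs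
  rw [show 1 - α/2 - 1 = -(α/2) by ring, show 1 - α/2 + (α - 1) = α/2 by ring,
    show -(1 - α/2) = α/2 - 1 by ring] at h
  rw [h, ENNReal.ofReal_mul (div_pos (Real.Gamma_pos_of_pos (by linarith))
    (Real.Gamma_pos_of_pos (by linarith))).le]

theorem stmt0 (α x : ℝ) (hα : 1 < α ∧ α < 2) (hx : x ∈ Set.Ioo (0:ℝ) 1) :
    (1 / Real.Gamma (2 - α)) *
      ∫ s in (0:ℝ)..x, (x - s) ^ (1 - α) * s ^ (α/2 - 1) * (1 - s) ^ (α/2 - 1)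
    = (Real.Gamma (α/2) / Real.Gamma (1 - α/2)) *
      ∫ s in (0:ℝ)..x, s ^ (-(α/2)) * (1 - s) ^ (-(α/2)) := by
  obtain ⟨hα₁, hα₂⟩ := hα
  obtain ⟨hx0, hx1⟩ := hx
  have hΓ₁ : 0 < Real.Gamma (1 - α/2) := Real.Gamma_pos_of_pos (by linarith)
  have hΓ₂ : 0 < Real.Gamma (α/2) := Real.Gamma_pos_of_pos (by linarith)
  have hsemi := riemannLiouville_riemannLiouville (a := 2 - α) (b := α - 1) (by linarith)
    (by linarith) (g := fun u ↦ ENNReal.ofReal (u ^ (-(α/2)) * (1 - u) ^ (-(α/2)))) (by fun_prop) x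
  rw [riemannLiouville_congr fun s hs ↦ riemannLiouville_sub_one_rpow_neg_half_mul hα₁
      hα₂ ⟨hs.1, hs.2.trans hx1⟩, riemannLiouville_const_mul _ ENNReal.ofReal_ne_top,
    show 2 - α + (α - 1) = 1 by ring] at hsemi
  have h := congrArg ENNReal.toReal hsemi
  rw [ENNReal.toReal_mul, ENNReal.toReal_ofReal (div_pos hΓ₁ hΓ₂).le,
    toReal_riemannLiouville_ofReal (by linarith) hx0.le (by fun_prop) fun s hs ↦
      mul_nonneg (Real.rpow_nonneg hs.1.le _) (Real.rpow_nonneg (by linarith [hs.2]) _),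
    toReal_riemannLiouville_ofReal one_pos hx0.le (by fun_prop) fun s hs ↦
      mul_nonneg (Real.rpow_nonneg hs.1.le _) (Real.rpow_nonneg (by linarith [hs.2]) _)] at h
  simp only [Real.Gamma_one, inv_one, one_mul, sub_self, Real.rpow_zero,
    show 2 - α - 1 = 1 - α by ring, ← mul_assoc] at h
  rw [← h, ← mul_assoc, ← mul_assoc, div_mul_div_comm, mul_comm (Real.Gamma (α/2)),
    div_self (by positivity), one_mul, one_div]
end

section
/- For 1 < α < 2 and x ∈ (0,1), the right Riemann–Liouville fractional integral of order 2−α of k(s) = s^{α/2−1}(1−s)^{α/2−1} satisfies: (1/Γ(2−α)) ∫ₓ¹ (s−x)^{1−α} s^{α/2−1} (1−s)^{α/2−1} ds = (Γ(α/2)/Γ(1−α/2)) ∫ₓ¹ s^{−α/2} (1−s)^{−α/2} ds. -/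
/-!
Put `g r = r ^ (-α/2) * (1 - r) ^ (-α/2)`. The substitution `r ↦ s / r`, an involution of
`(s, 1)`, followed by the Beta integral shows that `k` is itself a right fractional integral of
`g`: `∫ₛ¹ (r - s) ^ (α - 2) g r dr = B(1 - α/2, α - 1) k s`. The left-hand side is therefore
a multiple of the iterated integral `I^(2-α) I^(α-1) g`, which by Fubini equals
`B(2 - α, α - 1) I^1 g = B(2 - α, α - 1) ∫ₓ¹ g`. Since `(2 - α) + (α - 1) = 1`, the Gamma
factors of the two Beta values collapse to `Γ(2 - α) Γ(α/2) / Γ(1 - α/2)`.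
-/

open Real Set MeasureTheory
open ProbabilityTheory (beta beta_pos beta_eq_betaIntegralReal)
open intervalIntegral (intervalIntegrable_rpow')

theorem integral_rpow_mul_one_sub_rpow {p q : ℝ} (hp : 0 < p) (hq : 0 < q) :
    ∫ v in (0:ℝ)..1, v ^ (p - 1) * (1 - v) ^ (q - 1) = beta p q := by
  have h : ((∫ v in (0:ℝ)..1, v ^ (p - 1) * (1 - v) ^ (q - 1) : ℝ) : ℂ)
      = Complex.betaIntegral p q := by
    rw [Complex.betaIntegral, ← intervalIntegral.integral_ofReal]
    refine intervalIntegral.integral_congr fun v hv => ?_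
    rw [uIcc_of_le zero_le_one] at hv
    push_cast
    rw [Complex.ofReal_cpow hv.1, Complex.ofReal_cpow (sub_nonneg.2 hv.2)]
    push_cast
    rfl
  rw [beta_eq_betaIntegralReal p q hp hq, ← h, Complex.ofReal_re]

theorem integral_sub_rpow_mul_sub_rpow {a b p q : ℝ} (hab : a < b) (hp : 0 < p) (hq : 0 < q) :
    ∫ s in a..b, (s - a) ^ (p - 1) * (b - s) ^ (q - 1) = (b - a) ^ (p + q - 1) * beta p q := by
  have hba : 0 < b - a := sub_pos.2 hab
  have h := intervalIntegral.smul_integral_comp_add_mul (a := 0) (b := 1)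
    (fun s => (s - a) ^ (p - 1) * (b - s) ^ (q - 1)) (b - a) a
  rw [mul_zero, add_zero, mul_one, add_sub_cancel, smul_eq_mul] at h
  rw [← h, ← integral_rpow_mul_one_sub_rpow hp hq, ← intervalIntegral.integral_const_mul,
    ← intervalIntegral.integral_const_mul]
  refine intervalIntegral.integral_congr fun v hv => ?_
  rw [uIcc_of_le zero_le_one] at hv
  rw [show a + (b - a) * v - a = (b - a) * v by ring,
    show b - (a + (b - a) * v) = (b - a) * (1 - v) by ring,
    mul_rpow hba.le hv.1, mul_rpow hba.le (sub_nonneg.2 hv.2),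
    show p + q - 1 = 1 + (p - 1) + (q - 1) by ring, rpow_add hba, rpow_add hba, rpow_one]
  ring

theorem intervalIntegrable_sub_rpow_mul_sub_rpow {a b p q : ℝ} (hab : a < b) (hp : -1 < p)
    (hq : -1 < q) : IntervalIntegrable (fun s => (s - a) ^ p * (b - s) ^ q) volume a b := by
  have ham : a < (a + b) / 2 := by linarith
  have hmb : (a + b) / 2 < b := by linarith
  refine IntervalIntegrable.trans (b := (a + b) / 2) ?_ ?_
  · refine IntervalIntegrable.mul_continuousOn ?_ ?_
    · simpa using
        (intervalIntegrable_rpow' hp (a := 0) (b := (a + b) / 2 - a)).comp_sub_right a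
    · refine ContinuousOn.rpow_const (by fun_prop) fun s hs => Or.inl ?_
      rw [uIcc_of_le ham.le] at hs
      linarith [hs.2]
  · refine IntervalIntegrable.continuousOn_mul ?_ ?_
    · simpa using
        ((intervalIntegrable_rpow' hq (a := 0) (b := b - (a + b) / 2)).comp_sub_left b).symm
    · refine ContinuousOn.rpow_const (by fun_prop) fun s hs => Or.inl ?_
      rw [uIcc_of_le hmb.le] at hs
      linarith [hs.1]

theorem integrableOn_rpow_mul_one_sub_rpow {x a c : ℝ} (hx0 : 0 < x) (hx1 : x < 1) (hc : -1 < c) :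
    IntegrableOn (fun r => r ^ a * (1 - r) ^ c) (Ioo x 1) := by
  refine (intervalIntegrable_iff_integrableOn_Ioo_of_le hx1.le).1
    (IntervalIntegrable.continuousOn_mul ?_ ?_)
  · simpa using
      ((intervalIntegrable_rpow' hc (a := 0) (b := 1 - x)).comp_sub_left 1).symm
  · refine ContinuousOn.rpow_const continuousOn_id fun r hr => Or.inl ?_
    rw [uIcc_of_le hx1.le] at hr
    exact (hx0.trans_le hr.1).ne'

/-- The change of variables is `r = y / t`, an involution of `(y, 1)`. -/
theorem integral_sub_rpow_mul_rpow_mul_one_sub_rpow_of_add_eq_neg_two {y a b c : ℝ} (hy0 : 0 < y)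
    (hy1 : y < 1) (habc : a + b + c = -2) :
    ∫ r in y..1, (r - y) ^ a * (r ^ b * (1 - r) ^ c)
      = y ^ (a + b + 1) * ∫ t in y..1, (t - y) ^ c * (1 - t) ^ a := by
  have hmaps : MapsTo (y / ·) (Ioo y 1) (Ioo y 1) := fun t ⟨hyt, _⟩ => by
    have ht0 : 0 < t := hy0.trans hyt
    exact ⟨(lt_div_iff₀ ht0).2 (by nlinarith), (div_lt_one ht0).2 hyt⟩
  have hinv : InvOn (y / ·) (y / ·) (Ioo y 1) (Ioo y 1) :=
    ⟨fun _ _ => div_div_cancel₀ hy0.ne', fun _ _ => div_div_cancel₀ hy0.ne'⟩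
  have hbij := hinv.bijOn hmaps hmaps
  have hderiv : ∀ t ∈ Ioo y 1, HasDerivWithinAt (y / ·) (-(y / t ^ 2)) (Ioo y 1) t :=
    fun t ht => by
      simpa [div_eq_mul_inv] using
        ((hasDerivAt_inv (hy0.trans ht.1).ne').const_mul y).hasDerivWithinAt
  rw [intervalIntegral.integral_of_le hy1.le, intervalIntegral.integral_of_le hy1.le,
    integral_Ioc_eq_integral_Ioo, integral_Ioc_eq_integral_Ioo,
    ← MeasureTheory.integral_const_mul]
  conv_lhs => rw [← hbij.image_eq,
    integral_image_eq_integral_abs_deriv_smul measurableSet_Ioo hderiv hbij.injOn]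
  refine setIntegral_congr_fun measurableSet_Ioo fun t ⟨hyt, ht1⟩ => ?_
  have ht0 : 0 < t := hy0.trans hyt
  have hpow : t ^ a * t ^ b * t ^ c * t ^ 2 = 1 := by
    rw [← rpow_add ht0, ← rpow_add ht0, habc, rpow_neg ht0.le, ← rpow_natCast]
    push_cast
    exact inv_mul_cancel₀ (rpow_pos_of_pos ht0 2).ne'
  simp only [smul_eq_mul, abs_neg, abs_of_pos (by positivity : 0 < y / t ^ 2)]
  rw [show y / t - y = y * (1 - t) / t by field_simp, show 1 - y / t = (t - y) / t by field_simp,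
    div_rpow (by nlinarith) ht0.le, mul_rpow hy0.le (by linarith), div_rpow hy0.le ht0.le,
    div_rpow (by linarith) ht0.le, rpow_add hy0, rpow_add hy0, rpow_one]
  field_simp
  linear_combination -hpow

theorem integral_sub_rpow_mul_rpow_neg_mul_one_sub_rpow {y p q : ℝ} (hy0 : 0 < y) (hy1 : y < 1)
    (hp : 0 < p) (hq : 0 < q) :
    ∫ r in y..1, (r - y) ^ (q - 1) * (r ^ (-(p + q)) * (1 - r) ^ (p - 1))
      = beta p q * (y ^ (-p) * (1 - y) ^ (p + q - 1)) := by
  rw [integral_sub_rpow_mul_rpow_mul_one_sub_rpow_of_add_eq_neg_two hy0 hy1 (by ring),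
    integral_sub_rpow_mul_sub_rpow hy1 hp hq, show q - 1 + -(p + q) + 1 = -p by ring]
  ring

noncomputable def iteratedFracIntegrand (x p q : ℝ) (g : ℝ → ℝ) (s r : ℝ) : ℝ :=
  if s < r then (s - x) ^ (p - 1) * ((r - s) ^ (q - 1) * g r) else 0

section iteratedFracIntegrand

variable {x b p q : ℝ} {g : ℝ → ℝ}

theorem integral_iteratedFracIntegrand_right {s : ℝ} (hs : s ∈ Ioo x b) :
    ∫ r in Ioo x b, iteratedFracIntegrand x p q g s r
      = (s - x) ^ (p - 1) * ∫ r in s..b, (r - s) ^ (q - 1) * g r := by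
  have hK : iteratedFracIntegrand x p q g s
      = (Ioi s).indicator fun r => (s - x) ^ (p - 1) * ((r - s) ^ (q - 1) * g r) := by
    ext r; simp [iteratedFracIntegrand, indicator_apply]
  rw [hK, integral_indicator measurableSet_Ioi, Measure.restrict_restrict measurableSet_Ioi,
    Ioi_inter_Ioo, max_eq_left hs.1.le, MeasureTheory.integral_const_mul,
    intervalIntegral.integral_of_le hs.2.le, integral_Ioc_eq_integral_Ioo]

theorem iteratedFracIntegrand_eq_indicator_Iio (r : ℝ) :
    (iteratedFracIntegrand x p q g · r)
      = (Iio r).indicator fun s => (s - x) ^ (p - 1) * (r - s) ^ (q - 1) * g r := by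
  ext s; simp [iteratedFracIntegrand, indicator_apply, mul_assoc]

theorem integral_iteratedFracIntegrand_left {r : ℝ} (hr : r ∈ Ioo x b) (hp : 0 < p)
    (hq : 0 < q) :
    ∫ s in Ioo x b, iteratedFracIntegrand x p q g s r
      = beta p q * ((r - x) ^ (p + q - 1) * g r) := by
  rw [iteratedFracIntegrand_eq_indicator_Iio, integral_indicator measurableSet_Iio,
    Measure.restrict_restrict measurableSet_Iio, Iio_inter_Ioo, min_eq_left hr.2.le,
    MeasureTheory.integral_mul_const, ← integral_Ioc_eq_integral_Ioo,
    ← intervalIntegral.integral_of_le hr.1.le, integral_sub_rpow_mul_sub_rpow hr.1 hp hq]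
  ring

theorem norm_iteratedFracIntegrand {s : ℝ} (hs : x < s) (r : ℝ) :
    ‖iteratedFracIntegrand x p q g s r‖ = iteratedFracIntegrand x p q (|g ·|) s r := by
  unfold iteratedFracIntegrand
  split_ifs with hsr
  · rw [Real.norm_eq_abs, abs_mul, abs_mul, abs_of_nonneg (rpow_nonneg (sub_nonneg.2 hs.le) _),
      abs_of_nonneg (rpow_nonneg (sub_nonneg.2 hsr.le) _)]
  · exact norm_zero

theorem integrable_iteratedFracIntegrand (hg : Measurable g) (hp : 0 < p) (hq : 0 < q)
    (hgi : IntegrableOn (fun r => (r - x) ^ (p + q - 1) * g r) (Ioo x b)) :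
    Integrable (Function.uncurry (iteratedFracIntegrand x p q g))
      ((volume.restrict (Ioo x b)).prod (volume.restrict (Ioo x b))) := by
  have hmeas : Measurable (Function.uncurry (iteratedFracIntegrand x p q g)) :=
    Measurable.ite (measurableSet_lt measurable_fst measurable_snd) (by fun_prop)
      measurable_const
  refine (integrable_prod_iff' hmeas.aestronglyMeasurable).2 ⟨?_, ?_⟩
  · refine (ae_restrict_iff' measurableSet_Ioo).2 (ae_of_all _ fun r hr => ?_)
    simp only [Function.uncurry_apply_pair]
    rw [iteratedFracIntegrand_eq_indicator_Iio, integrable_indicator_iff measurableSet_Iio,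
      IntegrableOn, Measure.restrict_restrict measurableSet_Iio, Iio_inter_Ioo,
      min_eq_left hr.2.le]
    exact ((intervalIntegrable_iff_integrableOn_Ioo_of_le hr.1.le).1
      (intervalIntegrable_sub_rpow_mul_sub_rpow hr.1 (by linarith) (by linarith))).mul_const _
  · refine (hgi.norm.const_mul (beta p q)).congr ?_
    refine (ae_restrict_iff' measurableSet_Ioo).2 (ae_of_all _ fun r hr => ?_)
    simp only [Function.uncurry_apply_pair]
    rw [← setIntegral_congr_fun measurableSet_Ioo fun s hs =>
        (norm_iteratedFracIntegrand hs.1 r).symm,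
      integral_iteratedFracIntegrand_left hr hp hq, Real.norm_eq_abs, abs_mul,
      abs_of_nonneg (rpow_nonneg (sub_nonneg.2 hr.1.le) _)]

/-- The semigroup law `I^p I^q = I^(p+q)` of right Riemann–Liouville integrals, stripped of
their `1 / Γ` normalisations. -/
theorem integral_sub_rpow_mul_integral_sub_rpow_mul (hxb : x < b) (hg : Measurable g)
    (hp : 0 < p) (hq : 0 < q)
    (hgi : IntegrableOn (fun r => (r - x) ^ (p + q - 1) * g r) (Ioo x b)) :
    ∫ s in x..b, (s - x) ^ (p - 1) * ∫ r in s..b, (r - s) ^ (q - 1) * g r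
      = beta p q * ∫ r in x..b, (r - x) ^ (p + q - 1) * g r := by
  rw [intervalIntegral.integral_of_le hxb.le, intervalIntegral.integral_of_le hxb.le,
    integral_Ioc_eq_integral_Ioo, integral_Ioc_eq_integral_Ioo]
  calc ∫ s in Ioo x b, (s - x) ^ (p - 1) * ∫ r in s..b, (r - s) ^ (q - 1) * g r
      = ∫ s in Ioo x b, ∫ r in Ioo x b, iteratedFracIntegrand x p q g s r :=
        setIntegral_congr_fun measurableSet_Ioo fun s hs =>
          (integral_iteratedFracIntegrand_right hs).symm
    _ = ∫ r in Ioo x b, ∫ s in Ioo x b, iteratedFracIntegrand x p q g s r :=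
        integral_integral_swap (integrable_iteratedFracIntegrand hg hp hq hgi)
    _ = ∫ r in Ioo x b, beta p q * ((r - x) ^ (p + q - 1) * g r) :=
        setIntegral_congr_fun measurableSet_Ioo fun r hr =>
          integral_iteratedFracIntegrand_left hr hp hq
    _ = _ := MeasureTheory.integral_const_mul _ _

end iteratedFracIntegrand

theorem integral_sub_rpow_mul_rpow_neg_half_mul_one_sub_rpow_neg_half {α s : ℝ} (hα1 : 1 < α)
    (hα2 : α < 2) (hs0 : 0 < s) (hs1 : s < 1) :
    ∫ r in s..1, (r - s) ^ (α - 2) * (r ^ (-(α/2)) * (1 - r) ^ (-(α/2)))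
      = beta (1 - α/2) (α - 1) * (s ^ (α/2 - 1) * (1 - s) ^ (α/2 - 1)) := by
  have h := integral_sub_rpow_mul_rpow_neg_mul_one_sub_rpow hs0 hs1
    (p := 1 - α/2) (q := α - 1) (by linarith) (by linarith)
  rwa [show α - 1 - 1 = α - 2 by ring, show 1 - α/2 + (α - 1) = α/2 by ring,
    show 1 - α/2 - 1 = -(α/2) by ring, show -(1 - α/2) = α/2 - 1 by ring] at h

theorem beta_div_Gamma_div_beta {α : ℝ} (hα1 : 1 < α) (hα2 : α < 2) :
    beta (2 - α) (α - 1) / Gamma (2 - α) / beta (1 - α/2) (α - 1)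
      = Gamma (α/2) / Gamma (1 - α/2) := by
  unfold beta
  rw [show 2 - α + (α - 1) = 1 by ring, show 1 - α/2 + (α - 1) = α/2 by ring, Gamma_one]
  have := (Gamma_pos_of_pos (by linarith : 0 < 2 - α)).ne'
  have := (Gamma_pos_of_pos (by linarith : 0 < α - 1)).ne'
  have := (Gamma_pos_of_pos (by linarith : 0 < 1 - α/2)).ne'
  field_simp

theorem stmt1 (α x : ℝ) (hα : 1 < α ∧ α < 2) (hx : x ∈ Set.Ioo (0:ℝ) 1) :
    (1 / Real.Gamma (2 - α)) *
      ∫ s in x..(1:ℝ), (s - x) ^ (1 - α) * s ^ (α/2 - 1) * (1 - s) ^ (α/2 - 1)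
    = (Real.Gamma (α/2) / Real.Gamma (1 - α/2)) *
      ∫ s in x..(1:ℝ), s ^ (-(α/2)) * (1 - s) ^ (-(α/2)) := by
  obtain ⟨hα1, hα2⟩ := hα
  obtain ⟨hx0, hx1⟩ := hx
  set g : ℝ → ℝ := fun r => r ^ (-(α/2)) * (1 - r) ^ (-(α/2))
  have hB : beta (1 - α/2) (α - 1) ≠ 0 := (beta_pos (by linarith) (by linarith)).ne'
  have hg : IntegrableOn (fun r => (r - x) ^ ((2 - α) + (α - 1) - 1) * g r) (Ioo x 1) := by
    rw [show (2 - α) + (α - 1) - 1 = 0 by ring]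
    simpa only [rpow_zero, one_mul] using
      integrableOn_rpow_mul_one_sub_rpow (a := -(α/2)) (c := -(α/2)) hx0 hx1 (by linarith)
  have hk : ∫ s in x..1, (s - x) ^ (1 - α) * s ^ (α/2 - 1) * (1 - s) ^ (α/2 - 1)
      = (beta (1 - α/2) (α - 1))⁻¹ *
        ∫ s in x..1, (s - x) ^ ((2 - α) - 1) *
          ∫ r in s..1, (r - s) ^ ((α - 1) - 1) * g r := by
    rw [← intervalIntegral.integral_const_mul]
    refine intervalIntegral.integral_congr_Ioo_of_le hx1.le fun s hs => ?_
    rw [show 2 - α - 1 = 1 - α by ring, show α - 1 - 1 = α - 2 by ring,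
      integral_sub_rpow_mul_rpow_neg_half_mul_one_sub_rpow_neg_half hα1 hα2 (hx0.trans hs.1) hs.2,
      mul_left_comm _ (beta _ _), inv_mul_cancel_left₀ hB]
    ring
  rw [hk, integral_sub_rpow_mul_integral_sub_rpow_mul hx1 (by fun_prop) (by linarith)
    (by linarith) hg, show 2 - α + (α - 1) - 1 = 0 by ring, ← beta_div_Gamma_div_beta hα1 hα2]
  simp only [rpow_zero, one_mul]
  ring
end

section
/- Let 1 < α < 2 and let p, q ∈ (−1, 0) satisfy p + q = α − 2 and r·sin(−πq) = (1−r)·sin(−πp) for some r ∈ (0,1). Then for k(x) = x^p (1−x)^q, the function x ↦ r·D𝐃^{−(2−α)}k(x) + (1−r)·D𝐃^{−(2−α)*}k(x) is identically zero on (0,1). -/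
/-!
Put `σ = 2 - α`, `k x = x^p (1-x)^q` and `g x = x^(-q-1) (1-x)^(-p-1)`. The substitution
`t = s(1-v)/(1-sv)` turns `𝐃^{-(1-σ)} g` into a Beta integral and gives
`k = Γ(1+p)/Γ(-q) · 𝐃^{-(1-σ)} g`. By Fubini `𝐃^{-σ} 𝐃^{-(1-σ)} = 𝐃^{-1}`, so
`D 𝐃^{-σ} k = Γ(1+p)/Γ(-q) · g`; reflecting `x ↦ 1 - x` swaps `p` and `q` and gives
`D 𝐃^{-σ*} k = -Γ(1+q)/Γ(-p) · g`. By Euler's reflection formula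
`Γ(1+z) Γ(-z) = π / sin(-πz)`, the hypothesis on `r` says exactly that the weights `r` and `1 - r`
cancel these two multiples of `g`.
-/

open intervalIntegral

open Set MeasureTheory Real

lemma integrableOn_sub_rpow_mul_sub_rpow {t y u v : ℝ} (hty : t < y) (hu : -1 < u)
    (hv : -1 < v) : IntegrableOn (fun s => (y - s) ^ u * (s - t) ^ v) (Ioo t y) := by
  obtain ⟨m, htm, hmy⟩ := exists_between hty
  have left : IntervalIntegrable (fun s => (y - s) ^ u * (s - t) ^ v) volume t m := by
    have h := (intervalIntegrable_rpow' (a := 0) (b := m - t) hv).comp_sub_right t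
    simp only [zero_add, sub_add_cancel] at h
    refine h.continuousOn_mul ((continuousOn_const.sub continuousOn_id).rpow_const ?_)
    intro s hs
    rw [uIcc_of_le htm.le] at hs
    exact Or.inl (sub_pos.2 (hs.2.trans_lt hmy)).ne'
  have right : IntervalIntegrable (fun s => (y - s) ^ u * (s - t) ^ v) volume m y := by
    have h := (intervalIntegrable_rpow' (a := y - m) (b := 0) hu).comp_sub_left y
    simp only [sub_sub_cancel, sub_zero] at h
    refine h.mul_continuousOn ((continuousOn_id.sub continuousOn_const).rpow_const ?_)
    intro s hs
    rw [uIcc_of_le hmy.le] at hs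
    exact Or.inl (sub_pos.2 (htm.trans_le hs.1)).ne'
  exact (intervalIntegrable_iff_integrableOn_Ioo_of_le hty.le).1 (left.trans right)

lemma integral_Ioo_rpow_mul_one_sub_rpow {a b : ℝ} (ha : 0 < a) (hb : 0 < b) :
    ∫ v in Ioo (0:ℝ) 1, v ^ (a - 1) * (1 - v) ^ (b - 1)
      = Gamma a * Gamma b / Gamma (a + b) := by
  have hB := Complex.betaIntegral_eq_Gamma_mul_div a b (by simpa using ha) (by simpa using hb)
  rw [← Complex.ofReal_add, Complex.Gamma_ofReal, Complex.Gamma_ofReal, Complex.Gamma_ofReal,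
    Complex.betaIntegral] at hB
  rw [← integral_Ioc_eq_integral_Ioo, ← integral_of_le zero_le_one]
  refine Complex.ofReal_injective ?_
  push_cast
  rw [← hB, ← intervalIntegral.integral_ofReal]
  refine integral_congr fun v hv => ?_
  rw [uIcc_of_le zero_le_one] at hv
  rw [Complex.ofReal_mul, Complex.ofReal_cpow hv.1, Complex.ofReal_cpow (by linarith [hv.2])]
  push_cast
  ring_nf

lemma integral_Ioo_sub_rpow_mul_sub_rpow {a b t y : ℝ} (ha : 0 < a) (hb : 0 < b) (hty : t < y) :
    ∫ s in Ioo t y, (y - s) ^ (a - 1) * (s - t) ^ (b - 1)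
      = Gamma a * Gamma b / Gamma (a + b) * (y - t) ^ (a + b - 1) := by
  have hyt : 0 < y - t := sub_pos.2 hty
  have hsubst := integral_comp_add_mul (fun s => (y - s) ^ (a - 1) * (s - t) ^ (b - 1))
    (a := 0) (b := 1) hyt.ne' t
  simp only [mul_zero, add_zero, mul_one, add_sub_cancel, smul_eq_mul] at hsubst
  have hscale : ∀ v ∈ uIcc (0:ℝ) 1,
      (y - (t + (y - t) * v)) ^ (a - 1) * (t + (y - t) * v - t) ^ (b - 1)
        = (y - t) ^ (a - 1) * (y - t) ^ (b - 1) * (v ^ (b - 1) * (1 - v) ^ (a - 1)) := by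
    intro v hv
    rw [uIcc_of_le zero_le_one] at hv
    rw [show y - (t + (y - t) * v) = (y - t) * (1 - v) by ring,
      show t + (y - t) * v - t = (y - t) * v by ring,
      mul_rpow hyt.le (by linarith [hv.2]), mul_rpow hyt.le hv.1]
    ring
  rw [← integral_Ioc_eq_integral_Ioo, ← integral_of_le hty.le,
    ← mul_inv_cancel_left₀ hyt.ne' (∫ s in t..y, _), ← hsubst, integral_congr hscale,
    intervalIntegral.integral_const_mul, integral_of_le zero_le_one, integral_Ioc_eq_integral_Ioo,
    integral_Ioo_rpow_mul_one_sub_rpow hb ha,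
    show a + b - 1 = 1 + ((a - 1) + (b - 1)) by ring, rpow_add hyt, rpow_add hyt, rpow_one,
    add_comm b a]
  ring

lemma mobius_jacobian_mul_rpow {a b c s v : ℝ} (habc : a + b + c = 1) (hs0 : 0 < s) (hs1 : s < 1)
    (hv0 : 0 < v) (hv1 : v < 1) :
    s * (1 - s) / (1 - s * v) ^ 2 * ((s * v * (1 - s) / (1 - s * v)) ^ (a - 1) *
      ((s * (1 - v) / (1 - s * v)) ^ (b - 1) * ((1 - s) / (1 - s * v)) ^ (c - 1)))
      = v ^ (a - 1) * (1 - v) ^ (b - 1) * (s ^ (a + b - 1) * (1 - s) ^ (a + c - 1)) := by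
  have hD : 0 < 1 - s * v := by nlinarith
  have h1s : 0 < 1 - s := by linarith
  have h1v : 0 < 1 - v := by linarith
  have hDpow : (1 - s * v) ^ (a - 1) * (1 - s * v) ^ (b - 1) * (1 - s * v) ^ (c - 1) *
      (1 - s * v) ^ 2 = 1 := by
    rw [← rpow_add hD, ← rpow_add hD, ← rpow_natCast, ← rpow_add hD]
    norm_num [show a - 1 + (b - 1) + (c - 1) + 2 = 0 by linarith]
  rw [div_rpow (by positivity) hD.le, div_rpow (by positivity) hD.le, div_rpow h1s.le hD.le,
    mul_rpow (by positivity) h1s.le, mul_rpow hs0.le hv0.le, mul_rpow hs0.le h1v.le,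
    show a + b - 1 = (a - 1) + (b - 1) + 1 by ring, show a + c - 1 = (a - 1) + (c - 1) + 1 by ring,
    rpow_add hs0, rpow_add hs0, rpow_add h1s, rpow_add h1s, rpow_one, rpow_one]
  field_simp
  linear_combination -hDpow

lemma injOn_mobius {s : ℝ} (hs0 : 0 < s) (hs1 : s < 1) :
    InjOn (fun v => s * (1 - v) / (1 - s * v)) (Ioo 0 1) := by
  intro v hv w hw hvw
  rw [div_eq_div_iff (by nlinarith [hv.2]) (by nlinarith [hw.2])] at hvw
  have : s * (1 - s) * (w - v) = 0 := by linear_combination hvw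
  have := (mul_eq_zero.1 this).resolve_left (by nlinarith)
  linarith

lemma image_mobius_Ioo {s : ℝ} (hs0 : 0 < s) (hs1 : s < 1) :
    (fun v => s * (1 - v) / (1 - s * v)) '' Ioo 0 1 = Ioo 0 s := by
  ext t
  constructor
  · rintro ⟨v, hv, rfl⟩
    have hD : 0 < 1 - s * v := by nlinarith [hv.2]
    exact ⟨div_pos (by nlinarith [hv.2]) hD,
      (div_lt_iff₀ hD).2 (by nlinarith [mul_pos (mul_pos hs0 hv.1) (sub_pos.2 hs1)])⟩
  · rintro ⟨ht0, hts⟩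
    have h1t : 0 < 1 - t := by linarith
    have hst : 0 < s * (1 - t) := by positivity
    refine ⟨(s - t) / (s * (1 - t)), ⟨div_pos (by linarith) hst, ?_⟩, ?_⟩
    · rw [div_lt_one hst]; nlinarith
    · have hD : 1 - s * ((s - t) / (s * (1 - t))) = (1 - s) / (1 - t) := by
        field_simp; ring
      simp only [hD]
      field_simp [(by linarith : (1:ℝ) - s ≠ 0)]
      ring

/- The substitution `t = s(1-v)/(1-sv)` maps this onto a Beta integral; `a + b + c = 1` is what
makes the powers of `1 - sv` cancel (`mobius_jacobian_mul_rpow`). -/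
lemma integral_Ioo_sub_rpow_mul_rpow_mul_one_sub_rpow {a b c s : ℝ} (ha : 0 < a) (hb : 0 < b)
    (habc : a + b + c = 1) (hs0 : 0 < s) (hs1 : s < 1) :
    ∫ t in Ioo 0 s, (s - t) ^ (a - 1) * (t ^ (b - 1) * (1 - t) ^ (c - 1))
      = Gamma a * Gamma b / Gamma (a + b) * (s ^ (a + b - 1) * (1 - s) ^ (a + c - 1)) := by
  have hD : ∀ v ∈ Ioo (0:ℝ) 1, 0 < 1 - s * v := fun v hv => by nlinarith [hv.1, hv.2]
  have hderiv : ∀ v ∈ Ioo (0:ℝ) 1, HasDerivWithinAt (fun v => s * (1 - v) / (1 - s * v))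
      (-(s * (1 - s) / (1 - s * v) ^ 2)) (Ioo 0 1) v := by
    intro v hv
    have h := (((hasDerivAt_id v).const_sub 1).const_mul s).div
      (((hasDerivAt_id v).const_mul s).const_sub 1) (hD v hv).ne'
    exact (h.congr_deriv (by simp only [id]; ring)).hasDerivWithinAt
  rw [← image_mobius_Ioo hs0 hs1,
    integral_image_eq_integral_abs_deriv_smul measurableSet_Ioo hderiv (injOn_mobius hs0 hs1),
    ← integral_Ioo_rpow_mul_one_sub_rpow ha hb, ← MeasureTheory.integral_mul_const]
  refine setIntegral_congr_fun measurableSet_Ioo fun v hv => ?_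
  have hDv := hD v hv
  have : 0 < 1 - s := by linarith
  rw [smul_eq_mul, abs_neg, abs_of_pos (by positivity),
    show s - s * (1 - v) / (1 - s * v) = s * v * (1 - s) / (1 - s * v) by field_simp; ring,
    show 1 - s * (1 - v) / (1 - s * v) = (1 - s) / (1 - s * v) by field_simp; ring]
  exact mobius_jacobian_mul_rpow habc hs0 hs1 hv.1 hv.2

/- The integrand of `∫ s in Ioo 0 y, (y - s)^(a-1) * ∫ t in Ioo 0 s, (s - t)^(b-1) * g t`,
extended by zero off the triangle `t < s`, so that the order of integration can be swapped. -/
noncomputable def abelKernel (a b y s t : ℝ) : ℝ :=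
  if t < s then (y - s) ^ (a - 1) * (s - t) ^ (b - 1) else 0

section abelKernel

variable {a b y : ℝ}

lemma abelKernel_nonneg {s : ℝ} (hs : s ≤ y) (t : ℝ) : 0 ≤ abelKernel a b y s t := by
  unfold abelKernel
  split_ifs with hts
  · have : 0 ≤ y - s := sub_nonneg.2 hs
    have : 0 ≤ s - t := by linarith
    positivity
  · exact le_rfl

lemma eqOn_abelKernel_left (t : ℝ) : EqOn (abelKernel a b y · t)
    ((Ioo t y).indicator fun s => (y - s) ^ (a - 1) * (s - t) ^ (b - 1)) (Ioo 0 y) := by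
  intro s hs
  by_cases hts : t < s <;> simp [abelKernel, hts, hs.2]

lemma integrableOn_abelKernel_left (ha : 0 < a) (hb : 0 < b) {t : ℝ} (ht : t < y) :
    IntegrableOn (abelKernel a b y · t) (Ioo 0 y) :=
  IntegrableOn.congr_fun ((integrable_indicator_iff measurableSet_Ioo).2
    (integrableOn_sub_rpow_mul_sub_rpow ht (by linarith) (by linarith))).integrableOn
    (eqOn_abelKernel_left t).symm measurableSet_Ioo

lemma setIntegral_abelKernel_left (ha : 0 < a) (hb : 0 < b) (hab : a + b = 1) {t : ℝ}
    (ht : t ∈ Ioo 0 y) : ∫ s in Ioo 0 y, abelKernel a b y s t = Gamma a * Gamma b := by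
  rw [setIntegral_congr_fun measurableSet_Ioo (eqOn_abelKernel_left t),
    setIntegral_indicator measurableSet_Ioo, inter_eq_right.2 (Ioo_subset_Ioo_left ht.1.le),
    integral_Ioo_sub_rpow_mul_sub_rpow ha hb ht.2, hab]
  simp

lemma setIntegral_abelKernel_right_mul {s : ℝ} (hs : s ≤ y) (g : ℝ → ℝ) :
    ∫ t in Ioo 0 y, abelKernel a b y s t * g t
      = (y - s) ^ (a - 1) * ∫ t in Ioo 0 s, (s - t) ^ (b - 1) * g t := by
  have hrow : EqOn (fun t => abelKernel a b y s t * g t)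
      ((Ioo 0 s).indicator fun t => (y - s) ^ (a - 1) * ((s - t) ^ (b - 1) * g t)) (Ioo 0 y) := by
    intro t ht
    by_cases hts : t < s <;> simp [abelKernel, hts, ht.1, mul_assoc]
  rw [setIntegral_congr_fun measurableSet_Ioo hrow, setIntegral_indicator measurableSet_Ioo,
    inter_eq_right.2 (Ioo_subset_Ioo_right hs), MeasureTheory.integral_const_mul]

lemma integrable_abelKernel_mul (ha : 0 < a) (hb : 0 < b) (hab : a + b = 1) {g : ℝ → ℝ}
    (hg : IntegrableOn g (Ioo 0 y)) :
    Integrable (Function.uncurry fun s t => abelKernel a b y s t * g t)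
      ((volume.restrict (Ioo 0 y)).prod (volume.restrict (Ioo 0 y))) := by
  have hmeas : AEStronglyMeasurable (Function.uncurry fun s t => abelKernel a b y s t * g t)
      ((volume.restrict (Ioo 0 y)).prod (volume.restrict (Ioo 0 y))) :=
    ((Measurable.ite (measurableSet_lt measurable_snd measurable_fst) (by fun_prop)
      measurable_const).aestronglyMeasurable).mul hg.aestronglyMeasurable.comp_snd
  refine (integrable_prod_iff' hmeas).2 ⟨?_, ?_⟩
  · filter_upwards [ae_restrict_mem measurableSet_Ioo] with t ht
    exact (integrableOn_abelKernel_left ha hb ht.2).mul_const (g t)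
  · refine (hg.norm.const_mul (Gamma a * Gamma b)).congr ?_
    filter_upwards [ae_restrict_mem measurableSet_Ioo] with t ht
    rw [← setIntegral_abelKernel_left ha hb hab ht, ← MeasureTheory.integral_mul_const]
    refine setIntegral_congr_fun measurableSet_Ioo fun s hs => ?_
    simp only [Function.uncurry_apply_pair, norm_mul,
      Real.norm_of_nonneg (abelKernel_nonneg hs.2.le t)]

lemma integral_Ioo_sub_rpow_mul_integral_Ioo_sub_rpow_mul (ha : 0 < a) (hb : 0 < b)
    (hab : a + b = 1) {g : ℝ → ℝ} (hg : IntegrableOn g (Ioo 0 y)) :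
    ∫ s in Ioo 0 y, (y - s) ^ (a - 1) * ∫ t in Ioo 0 s, (s - t) ^ (b - 1) * g t
      = Gamma a * Gamma b * ∫ t in Ioo 0 y, g t :=
  calc ∫ s in Ioo 0 y, (y - s) ^ (a - 1) * ∫ t in Ioo 0 s, (s - t) ^ (b - 1) * g t
      = ∫ s in Ioo 0 y, ∫ t in Ioo 0 y, abelKernel a b y s t * g t :=
        setIntegral_congr_fun measurableSet_Ioo fun s hs =>
          (setIntegral_abelKernel_right_mul hs.2.le g).symm
    _ = ∫ t in Ioo 0 y, ∫ s in Ioo 0 y, abelKernel a b y s t * g t :=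
        integral_integral_swap (integrable_abelKernel_mul ha hb hab hg)
    _ = ∫ t in Ioo 0 y, Gamma a * Gamma b * g t :=
        setIntegral_congr_fun measurableSet_Ioo fun t ht => by
          rw [MeasureTheory.integral_mul_const, setIntegral_abelKernel_left ha hb hab ht]
    _ = Gamma a * Gamma b * ∫ t in Ioo 0 y, g t := MeasureTheory.integral_const_mul _ _

end abelKernel

lemma intervalIntegrable_rpow_mul_one_sub_rpow {u v y : ℝ} (hu : -1 < u) (hy : y < 1) :
    IntervalIntegrable (fun t => t ^ u * (1 - t) ^ v) volume 0 y := by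
  refine (intervalIntegrable_rpow' hu).mul_continuousOn
    ((continuousOn_const.sub continuousOn_id).rpow_const fun t ht => Or.inl ?_)
  have : t ≤ max 0 y := by simpa using ht.2
  exact (sub_pos.2 (this.trans_lt (max_lt one_pos hy))).ne'

lemma integral_Ioo_sub_rpow_mul_rpow_mul_one_sub_rpow_eq_integral {σ p q y : ℝ} (hσ0 : 0 < σ)
    (hσ1 : σ < 1) (hq : q < 0) (hpq : p + q = -σ) (hy0 : 0 < y) (hy1 : y < 1) :
    ∫ s in Ioo 0 y, (y - s) ^ (σ - 1) * (s ^ p * (1 - s) ^ q)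
      = Gamma σ * Gamma (1 + p) / Gamma (-q) *
          ∫ t in Ioo 0 y, t ^ (-q - 1) * (1 - t) ^ (-p - 1) := by
  have hΓ₁ : 0 < Gamma (1 - σ) := Gamma_pos_of_pos (by linarith)
  have hΓ₂ : 0 < Gamma (-q) := Gamma_pos_of_pos (by linarith)
  have hΓ₃ : 0 < Gamma (1 + p) := Gamma_pos_of_pos (by linarith)
  have hk : ∀ s ∈ Ioo 0 y, s ^ p * (1 - s) ^ q = Gamma (1 + p) / (Gamma (1 - σ) * Gamma (-q)) *
      ∫ t in Ioo 0 s, (s - t) ^ (1 - σ - 1) * (t ^ (-q - 1) * (1 - t) ^ (-p - 1)) := by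
    intro s hs
    rw [integral_Ioo_sub_rpow_mul_rpow_mul_one_sub_rpow (by linarith) (by linarith)
      (by linarith : 1 - σ + -q + -p = 1) hs.1 (hs.2.trans hy1),
      show 1 - σ + -q = 1 + p by linarith, show 1 + p - 1 = p by ring,
      show 1 - σ + -p - 1 = q by linarith]
    field_simp
  have hg : IntegrableOn (fun t => t ^ (-q - 1) * (1 - t) ^ (-p - 1)) (Ioo 0 y) :=
    (intervalIntegrable_iff_integrableOn_Ioo_of_le hy0.le).1
      (intervalIntegrable_rpow_mul_one_sub_rpow (by linarith) hy1)
  rw [setIntegral_congr_fun measurableSet_Ioo fun s hs => by rw [hk s hs, mul_left_comm],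
    MeasureTheory.integral_const_mul,
    integral_Ioo_sub_rpow_mul_integral_Ioo_sub_rpow_mul hσ0 (by linarith) (by ring) hg]
  field_simp

/- `fracIntegralLeft σ` and `fracIntegralRight σ` are the fractional integrals `𝐃^{-σ}` and
`𝐃^{-σ*}` on `(0, 1)`. -/
noncomputable def fracIntegralLeft (σ : ℝ) (u : ℝ → ℝ) (x : ℝ) : ℝ :=
  1 / Gamma σ * ∫ s in (0:ℝ)..x, (x - s) ^ (σ - 1) * u s

noncomputable def fracIntegralRight (σ : ℝ) (u : ℝ → ℝ) (x : ℝ) : ℝ :=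
  1 / Gamma σ * ∫ s in x..(1:ℝ), (s - x) ^ (σ - 1) * u s

lemma fracIntegralRight_eq_fracIntegralLeft (σ : ℝ) (u : ℝ → ℝ) (x : ℝ) :
    fracIntegralRight σ u x = fracIntegralLeft σ (fun s => u (1 - s)) (1 - x) := by
  simp only [fracIntegralRight, fracIntegralLeft, sub_right_comm _ x,
    integral_comp_sub_left (fun s => (s - x) ^ (σ - 1) * u s) 1, sub_sub_cancel, sub_zero]

lemma hasDerivAt_fracIntegralLeft_rpow_mul_one_sub_rpow {σ p q x : ℝ} (hσ0 : 0 < σ)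
    (hσ1 : σ < 1) (hq : q < 0) (hpq : p + q = -σ) (hx : x ∈ Ioo 0 1) :
    HasDerivAt (fracIntegralLeft σ fun s => s ^ p * (1 - s) ^ q)
      (Gamma (1 + p) / Gamma (-q) * (x ^ (-q - 1) * (1 - x) ^ (-p - 1))) x := by
  set g : ℝ → ℝ := fun t => t ^ (-q - 1) * (1 - t) ^ (-p - 1)
  have hg_cont : ContinuousOn g (Ioo 0 1) := fun t ht =>
    ((continuousAt_id.rpow_const (Or.inl ht.1.ne')).mul
      ((continuousAt_const.sub continuousAt_id).rpow_const
        (Or.inl (sub_pos.2 ht.2).ne'))).continuousWithinAt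
  have hFTC : HasDerivAt (fun y => ∫ t in (0:ℝ)..y, g t) (g x) x :=
    integral_hasDerivAt_right (intervalIntegrable_rpow_mul_one_sub_rpow (by linarith) hx.2)
      (hg_cont.stronglyMeasurableAtFilter isOpen_Ioo x hx)
      (hg_cont.continuousAt (isOpen_Ioo.mem_nhds hx))
  refine (hFTC.const_mul (Gamma (1 + p) / Gamma (-q))).congr_of_eventuallyEq ?_
  filter_upwards [isOpen_Ioo.mem_nhds hx] with y hy
  have hΓ : Gamma σ ≠ 0 := (Gamma_pos_of_pos hσ0).ne'
  rw [fracIntegralLeft, integral_of_le hy.1.le, integral_of_le hy.1.le,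
    integral_Ioc_eq_integral_Ioo, integral_Ioc_eq_integral_Ioo,
    integral_Ioo_sub_rpow_mul_rpow_mul_one_sub_rpow_eq_integral hσ0 hσ1 hq hpq hy.1 hy.2]
  field_simp
  rfl

lemma hasDerivAt_fracIntegralRight_rpow_mul_one_sub_rpow {σ p q x : ℝ} (hσ0 : 0 < σ)
    (hσ1 : σ < 1) (hp : p < 0) (hpq : p + q = -σ) (hx : x ∈ Ioo 0 1) :
    HasDerivAt (fracIntegralRight σ fun s => s ^ p * (1 - s) ^ q)
      (-(Gamma (1 + q) / Gamma (-p)) * (x ^ (-q - 1) * (1 - x) ^ (-p - 1))) x := by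
  have hreflect : fracIntegralRight σ (fun s => s ^ p * (1 - s) ^ q)
      = (fracIntegralLeft σ fun s => s ^ q * (1 - s) ^ p) ∘ fun y => 1 - y := by
    funext y
    simp only [fracIntegralRight_eq_fracIntegralLeft, Function.comp_apply, sub_sub_cancel,
      mul_comm]
  have hleft := hasDerivAt_fracIntegralLeft_rpow_mul_one_sub_rpow hσ0 hσ1 hp
    (by linarith : q + p = -σ) (show 1 - x ∈ Ioo 0 1 by constructor <;> linarith [hx.1, hx.2])
  rw [hreflect]
  exact (hleft.comp x ((hasDerivAt_id' x).const_sub 1)).congr_deriv (by rw [sub_sub_cancel]; ring)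

lemma mul_Gamma_div_Gamma_eq_of_mul_sin_eq {p q r : ℝ} (hp : p ∈ Ioo (-1) 0)
    (hq : q ∈ Ioo (-1) 0) (h : r * sin (-(π * q)) = (1 - r) * sin (-(π * p))) :
    r * (Gamma (1 + p) / Gamma (-q)) = (1 - r) * (Gamma (1 + q) / Gamma (-p)) := by
  have hreflection : ∀ z, Gamma (1 + z) * Gamma (-z) = π / sin (-(π * z)) := fun z => by
    rw [mul_comm, show 1 + z = 1 - -z by ring, Gamma_mul_Gamma_one_sub, mul_neg]
  have hsin : ∀ z ∈ Ioo (-1:ℝ) 0, 0 < sin (-(π * z)) := fun z hz =>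
    sin_pos_of_pos_of_lt_pi (by nlinarith [pi_pos, hz.2]) (by nlinarith [pi_pos, hz.1])
  have hΓp : 0 < Gamma (-p) := Gamma_pos_of_pos (by linarith [hp.2])
  have hΓq : 0 < Gamma (-q) := Gamma_pos_of_pos (by linarith [hq.2])
  have hsp := hsin p hp
  have hsq := hsin q hq
  have hbalance : r * (Gamma (1 + p) * Gamma (-p)) = (1 - r) * (Gamma (1 + q) * Gamma (-q)) := by
    rw [hreflection, hreflection]
    field_simp
    linear_combination h
  field_simp
  linear_combination hbalance

theorem stmt3_general (α p q r : ℝ) (hα : 1 < α ∧ α < 2)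
    (hp : p ∈ Set.Ioo (-1:ℝ) 0) (hq : q ∈ Set.Ioo (-1:ℝ) 0)
    (hpq : p + q = α - 2)
    (hrs : r * Real.sin (-(Real.pi * q)) = (1 - r) * Real.sin (-(Real.pi * p))) :
    ∀ x ∈ Set.Ioo (0:ℝ) 1,
      r * deriv (fun y : ℝ =>
            (1 / Real.Gamma (2 - α)) *
              ∫ s in (0:ℝ)..y, (y - s) ^ (1 - α) * (s ^ p * (1 - s) ^ q)) x
      + (1 - r) * deriv (fun y : ℝ =>
            (1 / Real.Gamma (2 - α)) *
              ∫ s in y..(1:ℝ), (s - y) ^ (1 - α) * (s ^ p * (1 - s) ^ q)) x = 0 := by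
  intro x hx
  have hσ0 : 0 < 2 - α := by linarith [hα.2]
  have hσ1 : 2 - α < 1 := by linarith [hα.1]
  have hpq' : p + q = -(2 - α) := by linarith
  rw [show 1 - α = 2 - α - 1 by ring]
  change r * deriv (fracIntegralLeft (2 - α) fun s => s ^ p * (1 - s) ^ q) x
    + (1 - r) * deriv (fracIntegralRight (2 - α) fun s => s ^ p * (1 - s) ^ q) x = 0
  rw [(hasDerivAt_fracIntegralLeft_rpow_mul_one_sub_rpow hσ0 hσ1 hq.2 hpq' hx).deriv,
    (hasDerivAt_fracIntegralRight_rpow_mul_one_sub_rpow hσ0 hσ1 hp.2 hpq' hx).deriv]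
  linear_combination (x ^ (-q - 1) * (1 - x) ^ (-p - 1)) *
    mul_Gamma_div_Gamma_eq_of_mul_sin_eq hp hq hrs

theorem stmt3 (α p q r : ℝ) (hα : 1 < α ∧ α < 2)
    (hp : p ∈ Set.Ioo (-1:ℝ) 0) (hq : q ∈ Set.Ioo (-1:ℝ) 0)
    (hpq : p + q = α - 2) (hr : r ∈ Set.Ioo (0:ℝ) 1)
    (hrs : r * Real.sin (-(Real.pi * q)) = (1 - r) * Real.sin (-(Real.pi * p))) :
    ∀ x ∈ Set.Ioo (0:ℝ) 1,
      r * deriv (fun y : ℝ =>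
            (1 / Real.Gamma (2 - α)) *
              ∫ s in (0:ℝ)..y, (y - s) ^ (1 - α) * (s ^ p * (1 - s) ^ q)) x
      + (1 - r) * deriv (fun y : ℝ =>
            (1 / Real.Gamma (2 - α)) *
              ∫ s in y..(1:ℝ), (s - y) ^ (1 - α) * (s ^ p * (1 - s) ^ q)) x = 0 :=
  stmt3_general α p q r hα hp hq hpq hrs
end
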